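/- Let 1 ≤ p₁ ≤ p₂ < ∞, let φ₁ ∈ G_{p₁} and φ₂ ∈ G_{p₂}. Suppose there exists C' > 0 such that ‖x‖_{wℓ^{p₁}_{φ₁}} ≤ C' ‖x‖_{wℓ^{p₂}_{φ₂}} for every x ∈ wℓ^{p₂}_{φ₂}. Then there exists C > 0 such that φ₂(2N+1) ≤ C φ₁(2N+1) for every N ∈ ℕ. -/

import Mathlib

open scoped ENNReal NNReal BigOperators

/-- The discrete "ball" `S_{m,N} = {m-N, …, m+N}` as a finite set of integers. -/
noncomputable def S (m : ℤ) (N : ℕ) : Finset ℤ := Finset.Icc (m - N) (m + N)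

open Classical in
/-- The cardinality of `{k ∈ S_{m,N} : |x_k| > γ}`. -/
noncomputable def weakCard (x : ℤ → ℂ) (m : ℤ) (N : ℕ) (γ : ℝ≥0) : ℕ :=
  ((S m N).filter (fun k => γ < ‖x k‖₊)).card

/-- The generalized weak type discrete Morrey norm `‖x‖_{wℓ^p_φ}`. -/
noncomputable def wgMorreyNorm (p : ℝ) (φ : ℕ → ℝ) (x : ℤ → ℂ) : ℝ≥0∞ :=
  ⨆ (m : ℤ) (N : ℕ) (γ : ℝ≥0) (_ : 0 < γ),
    (ENNReal.ofReal (φ (2 * N + 1)))⁻¹ * (γ : ℝ≥0∞) *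
      ((weakCard x m N γ : ℝ≥0∞) / (2 * (N : ℝ≥0∞) + 1)) ^ (1 / p)

/-!
Test the embedding on the indicator of `S_{0,N}`. Taking `γ = 1/2` on that ball itself, its
`wℓ^{p₁}_{φ₁}`-norm is at least `1 / (2 φ₁(2N+1))`. Its `wℓ^{p₂}_{φ₂}`-norm is at most a
constant times `1 / φ₂(2N+1)`: on a ball `S_{m,M}` with `M ≤ N` the density is at most `1`
and `φ₂` is almost decreasing, while for `M ≥ N` the density is at most
`((2N+1)/(2M+1))^{1/p₂}` and `(2M+1)^{1/p₂} φ₂(2M+1)` is almost increasing.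
-/

lemma card_S (m : ℤ) (N : ℕ) : (S m N).card = 2 * N + 1 := by
  simp only [S, Int.card_Icc]; omega

section weakCard

lemma weakCard_le (x : ℤ → ℂ) (m : ℤ) (N : ℕ) (γ : ℝ≥0) : weakCard x m N γ ≤ 2 * N + 1 :=
  (Finset.card_filter_le _ _).trans (card_S m N).le

variable (A : Finset ℤ) (m : ℤ) (N : ℕ) {γ : ℝ≥0}

lemma nnnorm_indicator_one (k : ℤ) :
    ‖(A : Set ℤ).indicator (1 : ℤ → ℂ) k‖₊ = (A : Set ℤ).indicator 1 k := by
  by_cases hk : k ∈ A <;> simp [hk]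

lemma weakCard_indicator_le_card (γ : ℝ≥0) :
    weakCard ((A : Set ℤ).indicator 1) m N γ ≤ A.card := by
  classical
  refine Finset.card_le_card fun k hk => ?_
  by_contra hkA
  simp [Finset.mem_filter, nnnorm_indicator_one, hkA] at hk

lemma weakCard_indicator_of_one_le (hγ : 1 ≤ γ) :
    weakCard ((A : Set ℤ).indicator 1) m N γ = 0 := by
  classical
  refine Finset.card_eq_zero.mpr (Finset.filter_eq_empty_iff.mpr fun k _ => ?_)
  rw [nnnorm_indicator_one, not_lt]
  exact (Set.indicator_le_self' fun _ _ => zero_le_one' ℝ≥0) k |>.trans hγ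

lemma weakCard_indicator_S_self (hγ : γ < 1) :
    weakCard ((S m N : Set ℤ).indicator 1) m N γ = 2 * N + 1 := by
  classical
  rw [weakCard, Finset.filter_true_of_mem, card_S]
  intro k hk
  simpa [nnnorm_indicator_one, hk] using hγ

end weakCard

noncomputable def wgMorreyTerm (p : ℝ) (φ : ℕ → ℝ) (x : ℤ → ℂ) (m : ℤ) (N : ℕ) (γ : ℝ≥0) : ℝ :=
  (φ (2 * N + 1))⁻¹ * γ * ((weakCard x m N γ : ℝ) / (2 * N + 1)) ^ (1 / p)

section wgMorreyTerm

variable {p : ℝ} {φ : ℕ → ℝ} (x : ℤ → ℂ) (m : ℤ) (N : ℕ) (γ : ℝ≥0)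

lemma ofReal_wgMorreyTerm (hp : 0 ≤ p) (hφ : 0 < φ (2 * N + 1)) :
    ENNReal.ofReal (wgMorreyTerm p φ x m N γ) =
      (ENNReal.ofReal (φ (2 * N + 1)))⁻¹ * (γ : ℝ≥0∞) *
        ((weakCard x m N γ : ℝ≥0∞) / (2 * (N : ℝ≥0∞) + 1)) ^ (1 / p) := by
  have hden : (2 * (N : ℝ≥0∞) + 1) = ENNReal.ofReal (2 * N + 1) := by
    rw [ENNReal.ofReal_add (by positivity) zero_le_one, ENNReal.ofReal_mul zero_le_two]
    simp
  rw [wgMorreyTerm, hden, ← ENNReal.ofReal_natCast, ← ENNReal.ofReal_div_of_pos (by positivity),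
    ENNReal.ofReal_rpow_of_nonneg (by positivity) (by positivity),
    ← ENNReal.ofReal_inv_of_pos hφ, ← ENNReal.ofReal_coe_nnreal,
    ← ENNReal.ofReal_mul (by positivity), ← ENNReal.ofReal_mul (by positivity)]

lemma ofReal_wgMorreyTerm_le_wgMorreyNorm (hp : 0 ≤ p) (hφ : 0 < φ (2 * N + 1)) (hγ : 0 < γ) :
    ENNReal.ofReal (wgMorreyTerm p φ x m N γ) ≤ wgMorreyNorm p φ x := by
  rw [ofReal_wgMorreyTerm x m N γ hp hφ]
  exact le_iSup_of_le m <| le_iSup_of_le N <| le_iSup_of_le γ <| le_iSup_of_le hγ le_rfl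

lemma wgMorreyNorm_le_ofReal (hp : 0 ≤ p) (hφ : ∀ N : ℕ, 0 < φ (2 * N + 1)) {B : ℝ}
    (hB : ∀ (m : ℤ) (N : ℕ) (γ : ℝ≥0), 0 < γ → wgMorreyTerm p φ x m N γ ≤ B) :
    wgMorreyNorm p φ x ≤ ENNReal.ofReal B := by
  refine iSup_le fun m => iSup_le fun N => iSup_le fun γ => iSup_le fun hγ => ?_
  rw [← ofReal_wgMorreyTerm x m N γ hp (hφ N)]
  exact ENNReal.ofReal_le_ofReal (hB m N γ hγ)

end wgMorreyTerm

section almostMonotone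

variable {p : ℝ} {φ : ℕ → ℝ} {N₀ N k : ℕ}

lemma inv_mul_rpow_le_of_almostDecreasing (hp : 0 ≤ p) (hφ : ∀ N : ℕ, 0 < φ (2 * N + 1))
    {Cd : ℝ} (hCd : 0 < Cd) (hdec : ∀ M N : ℕ, M ≤ N → Cd * φ (2 * N + 1) ≤ φ (2 * M + 1))
    (hN : N ≤ N₀) (hk : k ≤ 2 * N + 1) :
    (φ (2 * N + 1))⁻¹ * ((k : ℝ) / (2 * N + 1)) ^ (1 / p) ≤ Cd⁻¹ / φ (2 * N₀ + 1) := by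
  have hφN := hφ N
  have hratio : ((k : ℝ) / (2 * N + 1)) ^ (1 / p) ≤ 1 := by
    refine Real.rpow_le_one (by positivity) ?_ (by positivity)
    rw [div_le_one (by positivity)]
    exact_mod_cast hk
  calc (φ (2 * N + 1))⁻¹ * ((k : ℝ) / (2 * N + 1)) ^ (1 / p)
      ≤ (φ (2 * N + 1))⁻¹ := mul_le_of_le_one_right (by positivity) hratio
    _ ≤ (Cd * φ (2 * N₀ + 1))⁻¹ := inv_anti₀ (mul_pos hCd (hφ N₀)) (hdec N N₀ hN)
    _ = Cd⁻¹ / φ (2 * N₀ + 1) := by rw [mul_inv, div_eq_mul_inv]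

lemma inv_mul_rpow_le_of_almostIncreasing (hp : 0 ≤ p) (hφ : ∀ N : ℕ, 0 < φ (2 * N + 1))
    {Ci : ℝ} (hinc : ∀ M N : ℕ, M ≤ N →
      (2 * (M : ℝ) + 1) ^ (1 / p) * φ (2 * M + 1) ≤
        Ci * ((2 * (N : ℝ) + 1) ^ (1 / p) * φ (2 * N + 1)))
    (hN : N₀ ≤ N) (hk : k ≤ 2 * N₀ + 1) :
    (φ (2 * N + 1))⁻¹ * ((k : ℝ) / (2 * N + 1)) ^ (1 / p) ≤ Ci / φ (2 * N₀ + 1) := by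
  have hφN := hφ N
  have hφN₀ := hφ N₀
  have hk' : (k : ℝ) ≤ 2 * N₀ + 1 := by exact_mod_cast hk
  have hpow : 0 < (2 * (N : ℝ) + 1) ^ (1 / p) := by positivity
  calc (φ (2 * N + 1))⁻¹ * ((k : ℝ) / (2 * N + 1)) ^ (1 / p)
      ≤ (φ (2 * N + 1))⁻¹ * ((2 * N₀ + 1 : ℝ) / (2 * N + 1)) ^ (1 / p) := by gcongr
    _ = (2 * (N₀ : ℝ) + 1) ^ (1 / p) / ((2 * (N : ℝ) + 1) ^ (1 / p) * φ (2 * N + 1)) := by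
      rw [Real.div_rpow (by positivity) (by positivity)]
      field_simp
    _ ≤ Ci / φ (2 * N₀ + 1) := by
      rw [div_le_div_iff₀ (by positivity) hφN₀]
      simpa [mul_comm, mul_assoc] using hinc N₀ N hN

end almostMonotone

variable {p : ℝ} {φ : ℕ → ℝ}

lemma half_inv_le_wgMorreyNorm_indicator_S (hp : 0 ≤ p) (m : ℤ) (N : ℕ)
    (hφ : 0 < φ (2 * N + 1)) :
    ENNReal.ofReal ((φ (2 * N + 1))⁻¹ / 2) ≤ wgMorreyNorm p φ ((S m N : Set ℤ).indicator 1) := by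
  refine le_trans (le_of_eq ?_)
    (ofReal_wgMorreyTerm_le_wgMorreyNorm _ m N (1 / 2) hp hφ (by norm_num))
  have h2N : (2 * (N : ℝ) + 1) ≠ 0 := by positivity
  rw [wgMorreyTerm, weakCard_indicator_S_self _ _ (by norm_num)]
  push_cast
  rw [div_self h2N, Real.one_rpow]
  norm_num [div_eq_mul_inv]

lemma wgMorreyNorm_indicator_S_le (hp : 0 < p) (hφ : ∀ N : ℕ, 0 < φ (2 * N + 1))
    {Cd : ℝ} (hCd : 0 < Cd) (hdec : ∀ M N : ℕ, M ≤ N → Cd * φ (2 * N + 1) ≤ φ (2 * M + 1))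
    {Ci : ℝ} (hinc : ∀ M N : ℕ, M ≤ N →
      (2 * (M : ℝ) + 1) ^ (1 / p) * φ (2 * M + 1) ≤
        Ci * ((2 * (N : ℝ) + 1) ^ (1 / p) * φ (2 * N + 1)))
    (m₀ : ℤ) (N₀ : ℕ) :
    wgMorreyNorm p φ ((S m₀ N₀ : Set ℤ).indicator 1) ≤
      ENNReal.ofReal (max Ci Cd⁻¹ / φ (2 * N₀ + 1)) := by
  refine wgMorreyNorm_le_ofReal _ hp.le hφ fun m N γ hγ => ?_
  rcases lt_or_ge γ 1 with hγ1 | hγ1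
  · have hcard := weakCard_indicator_le_card (S m₀ N₀) m N γ
    rw [card_S] at hcard
    calc wgMorreyTerm p φ _ m N γ
        ≤ (φ (2 * N + 1))⁻¹ * ((weakCard ((S m₀ N₀ : Set ℤ).indicator 1) m N γ : ℝ) /
            (2 * N + 1)) ^ (1 / p) := by
          rw [wgMorreyTerm, mul_right_comm]
          exact mul_le_of_le_one_right (by have := hφ N; positivity) (by exact_mod_cast hγ1.le)
      _ ≤ max Ci Cd⁻¹ / φ (2 * N₀ + 1) := by
          rcases le_total N N₀ with hN | hN
          · exact (inv_mul_rpow_le_of_almostDecreasing hp.le hφ hCd hdec hN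
              (weakCard_le _ m N γ)).trans (by gcongr; exacts [(hφ N₀).le, le_max_right _ _])
          · exact (inv_mul_rpow_le_of_almostIncreasing hp.le hφ hinc hN hcard).trans
              (by gcongr; exacts [(hφ N₀).le, le_max_left _ _])
  · rw [wgMorreyTerm, weakCard_indicator_of_one_le _ _ _ hγ1, Nat.cast_zero, zero_div,
      Real.zero_rpow (one_div_pos.mpr hp).ne', mul_zero]
    exact div_nonneg (le_max_of_le_right (by positivity)) (hφ N₀).le

theorem stmt18_general (p₁ p₂ : ℝ) (hp₁ : 1 ≤ p₁) (hp : p₁ ≤ p₂)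
    (φ₁ φ₂ : ℕ → ℝ)
    (hφ₁pos : ∀ N : ℕ, 0 < φ₁ (2 * N + 1)) (hφ₂pos : ∀ N : ℕ, 0 < φ₂ (2 * N + 1))
    (hdec₂ : ∃ C : ℝ, 0 < C ∧ ∀ M N : ℕ, M ≤ N → C * φ₂ (2 * N + 1) ≤ φ₂ (2 * M + 1))
    (hinc₂ : ∃ C : ℝ, 0 < C ∧ ∀ M N : ℕ, M ≤ N →
      (2 * (M : ℝ) + 1) ^ (1 / p₂) * φ₂ (2 * M + 1) ≤
        C * ((2 * (N : ℝ) + 1) ^ (1 / p₂) * φ₂ (2 * N + 1)))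
    (C' : ℝ) (hC' : 0 < C')
    (hnorm : ∀ x : ℤ → ℂ, wgMorreyNorm p₂ φ₂ x < ⊤ →
      wgMorreyNorm p₁ φ₁ x ≤ ENNReal.ofReal C' * wgMorreyNorm p₂ φ₂ x) :
    ∃ C : ℝ, 0 < C ∧ ∀ N : ℕ, φ₂ (2 * N + 1) ≤ C * φ₁ (2 * N + 1) := by
  obtain ⟨Cd, hCd, hdec⟩ := hdec₂
  obtain ⟨Ci, -, hinc⟩ := hinc₂
  have hp₂ : 0 < p₂ := by linarith
  have hK : 0 < max Ci Cd⁻¹ := lt_max_of_lt_right (inv_pos.mpr hCd)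
  refine ⟨2 * C' * max Ci Cd⁻¹, by positivity, fun N => ?_⟩
  have hφ₁ := hφ₁pos N
  have hφ₂ := hφ₂pos N
  have hup := wgMorreyNorm_indicator_S_le hp₂ hφ₂pos hCd hdec hinc 0 N
  have hlow := half_inv_le_wgMorreyNorm_indicator_S (p := p₁) (by linarith) 0 N hφ₁
  have hcompare : (φ₁ (2 * N + 1))⁻¹ / 2 ≤ C' * (max Ci Cd⁻¹ / φ₂ (2 * N + 1)) := by
    rw [← ENNReal.ofReal_le_ofReal_iff (by positivity), ENNReal.ofReal_mul hC'.le]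
    exact hlow.trans <| (hnorm _ (hup.trans_lt ENNReal.ofReal_lt_top)).trans
      (mul_le_mul_right hup _)
  generalize max Ci Cd⁻¹ = K at hcompare ⊢
  field_simp at hcompare
  linarith

theorem stmt18 (p₁ p₂ : ℝ) (hp₁ : 1 ≤ p₁) (hp : p₁ ≤ p₂)
    (φ₁ φ₂ : ℕ → ℝ)
    (hφ₁pos : ∀ N : ℕ, 0 < φ₁ (2 * N + 1)) (hφ₂pos : ∀ N : ℕ, 0 < φ₂ (2 * N + 1))
    (hdec₁ : ∃ C : ℝ, 0 < C ∧ ∀ M N : ℕ, M ≤ N → C * φ₁ (2 * N + 1) ≤ φ₁ (2 * M + 1))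
    (hinc₁ : ∃ C : ℝ, 0 < C ∧ ∀ M N : ℕ, M ≤ N →
      (2 * (M : ℝ) + 1) ^ (1 / p₁) * φ₁ (2 * M + 1) ≤
        C * ((2 * (N : ℝ) + 1) ^ (1 / p₁) * φ₁ (2 * N + 1)))
    (hdec₂ : ∃ C : ℝ, 0 < C ∧ ∀ M N : ℕ, M ≤ N → C * φ₂ (2 * N + 1) ≤ φ₂ (2 * M + 1))
    (hinc₂ : ∃ C : ℝ, 0 < C ∧ ∀ M N : ℕ, M ≤ N →
      (2 * (M : ℝ) + 1) ^ (1 / p₂) * φ₂ (2 * M + 1) ≤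
        C * ((2 * (N : ℝ) + 1) ^ (1 / p₂) * φ₂ (2 * N + 1)))
    (C' : ℝ) (hC' : 0 < C')
    (hnorm : ∀ x : ℤ → ℂ, wgMorreyNorm p₂ φ₂ x < ⊤ →
      wgMorreyNorm p₁ φ₁ x ≤ ENNReal.ofReal C' * wgMorreyNorm p₂ φ₂ x) :
    ∃ C : ℝ, 0 < C ∧ ∀ N : ℕ, φ₂ (2 * N + 1) ≤ C * φ₁ (2 * N + 1) :=
  stmt18_general p₁ p₂ hp₁ hp φ₁ φ₂ hφ₁pos hφ₂pos hdec₂ hinc₂ C' hC' hnorm
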